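/- Mycielski's theorem: Let X be a separable complete metric space without isolated points, and for each n ∈ ℕ let R_n be a residual subset of X^n. Then there exists a Mycielski set K ⊂ X (a set whose intersection with every nonempty open set contains a Cantor set) such that (x_1,...,x_n) ∈ R_n for every n and every n pairwise distinct points x_1,...,x_n ∈ K. -/

import Mathlib

/-!
Grow, simultaneously and level by level, one Cantor scheme of open sets for every member `u m`
of a countable π-base: at step `k` the root `u k` of scheme `k` is planted and every node already
present is split into two disjoint children of diameter `≤ 1/(k+1)` with closures inside it. Only
finitely many nodes are alive at each step, so they can then be shrunk until every product of
distinct nodes lies in each of the dense open sets `D n j` (`n, j ≤ k`) that cut out `R n`: for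
one product this is an open box inside `D n j`, and shrinking never undoes earlier steps. `K` is
the union of the Cantor sets induced by the schemes; distinct points of `K` lie in distinct nodes
at every late enough level.
-/

open Set Filter Topology Function CantorScheme PiNat Metric
open scoped ENNReal

lemma exists_seq_isOpen_dense_of_mem_residual {Y : Type*} [TopologicalSpace Y] [BaireSpace Y]
    {s : Set Y} (hs : s ∈ residual Y) :
    ∃ f : ℕ → Set Y, (∀ n, IsOpen (f n) ∧ Dense (f n)) ∧ ⋂ n, f n ⊆ s := by
  obtain ⟨t, hts, htG, htd⟩ := mem_residual.1 hs
  obtain ⟨f, hfo, rfl⟩ := isGδ_iff_eq_iInter_nat.1 htG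
  exact ⟨f, fun n => ⟨hfo n, htd.mono (iInter_subset f n)⟩, hts⟩

lemma exists_seq_isOpen_nonempty_subset (Y : Type*) [TopologicalSpace Y]
    [SecondCountableTopology Y] [Nonempty Y] :
    ∃ u : ℕ → Set Y, (∀ m, IsOpen (u m) ∧ (u m).Nonempty) ∧
      ∀ U, IsOpen U → U.Nonempty → ∃ m, u m ⊆ U := by
  obtain ⟨b, hbc, hb, hbasis⟩ := TopologicalSpace.exists_countable_basis Y
  obtain ⟨v, hv, -⟩ :=
    hbasis.exists_subset_of_mem_open (mem_univ (Classical.arbitrary Y)) isOpen_univ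
  obtain ⟨u, rfl⟩ := hbc.exists_eq_range ⟨v, hv⟩
  refine ⟨u, fun m => ⟨hbasis.isOpen (mem_range_self m), nonempty_iff_ne_empty.2 ?_⟩, ?_⟩
  · exact fun h => hb (h ▸ mem_range_self m)
  · rintro U hU ⟨x, hx⟩
    obtain ⟨_, ⟨m, rfl⟩, -, hmU⟩ := hbasis.exists_subset_of_mem_open hx hU
    exact ⟨m, hmU⟩

instance PiNat.perfectSpace {α : Type*} [TopologicalSpace α] [Nontrivial α] :
    PerfectSpace (ℕ → α) := by
  refine perfectSpace_iff_forall_not_isolated.2 fun σ => ?_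
  choose a ha using fun l => exists_ne (σ l)
  have : Tendsto (fun l => update σ l (a l)) atTop (𝓝[≠] σ) := by
    refine tendsto_nhdsWithin_iff.2 ⟨tendsto_pi_nhds.2 fun i => ?_, .of_forall fun l h => ?_⟩
    · refine tendsto_const_nhds.congr' ((eventually_gt_atTop i).mono fun l hl => ?_)
      exact (update_of_ne hl.ne _ _).symm
    · exact ha l (by simpa using congrFun h l)
  exact this.neBot

lemma Continuous.preperfect_range {α β : Type*} [TopologicalSpace α] [TopologicalSpace β]
    [PerfectSpace α] {f : α → β} (hf : Continuous f) (hinj : Injective f) :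
    Preperfect (range f) := by
  rintro _ ⟨x, rfl⟩
  have : Tendsto f (𝓝[≠] x) (𝓝[≠] (f x) ⊓ 𝓟 (range f)) :=
    tendsto_inf.2 ⟨hf.continuousAt.tendsto.inf (tendsto_principal_principal.2 fun _ => hinj.ne),
      tendsto_principal.2 (.of_forall mem_range_self)⟩
  exact this.neBot

namespace CantorScheme

variable {β α : Type*} [PseudoMetricSpace α] {A : List β → Set α}

lemma vanishingDiam_of_ediam_le (h : ∀ l, ediam (A l) ≤ (l.length : ℝ≥0∞)⁻¹) :
    VanishingDiam A := fun x =>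
  tendsto_of_tendsto_of_tendsto_of_le_of_le tendsto_const_nhds ENNReal.tendsto_inv_nat_nhds_zero
    (fun _ => bot_le) fun n => by simpa only [res_length] using h (res x n)

lemma exists_continuous_injective [TopologicalSpace β] [DiscreteTopology β] [CompleteSpace α]
    (hanti : ClosureAntitone A) (hdisj : CantorScheme.Disjoint A) (hdiam : VanishingDiam A)
    (hne : ∀ l, (A l).Nonempty) :
    ∃ f : (ℕ → β) → α, Continuous f ∧ Injective f ∧ ∀ x n, f x ∈ A (res x n) := by
  have hdom : ∀ x, x ∈ (inducedMap A).1 := by simp [hanti.map_of_vanishingDiam hdiam hne]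
  refine ⟨fun x => (inducedMap A).2 ⟨x, hdom x⟩, hdiam.map_continuous.comp (by fun_prop),
    fun x y hxy => ?_, fun x => map_mem ⟨x, hdom x⟩⟩
  simpa using hdisj.map_injective hxy

end CantorScheme

section Splitting

variable {X : Type*} [EMetricSpace X] {W : Set X} {ε : ℝ≥0∞}

lemma exists_isOpen_closure_subset_ediam_le (hW : IsOpen W) {x : X} (hx : x ∈ W) (hε : 0 < ε) :
    ∃ V, IsOpen V ∧ x ∈ V ∧ closure V ⊆ W ∧ ediam V ≤ ε := by
  obtain ⟨δ, hδ, hδW⟩ := nhds_basis_closedEBall.mem_iff.1 (hW.mem_nhds hx)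
  have hr : 0 < min δ (ε / 2) := lt_min hδ (ENNReal.half_pos hε.ne')
  refine ⟨eball x (min δ (ε / 2)), isOpen_eball, mem_eball_self hr, ?_, ?_⟩
  · exact (closure_minimal eball_subset_closedEBall isClosed_closedEBall).trans
      ((closedEBall_subset_closedEBall (min_le_left _ _)).trans hδW)
  · calc ediam (eball x (min δ (ε / 2))) ≤ 2 * min δ (ε / 2) := ediam_eball_le
      _ ≤ 2 * (ε / 2) := by gcongr; exact min_le_right _ _
      _ = ε := ENNReal.mul_div_cancel two_ne_zero ENNReal.ofNat_ne_top

lemma exists_pairwise_disjoint_isOpen_closure_subset [PerfectSpace X] (hW : IsOpen W)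
    (hne : W.Nonempty) (hε : 0 < ε) :
    ∃ V : Bool → Set X,
      (∀ b, IsOpen (V b) ∧ (V b).Nonempty ∧ closure (V b) ⊆ W ∧ ediam (V b) ≤ ε) ∧
        Pairwise (Disjoint on V) := by
  obtain ⟨x, hx⟩ := hne
  obtain ⟨y, ⟨-, hy⟩, hyx⟩ := preperfect_iff_nhds.1 hW.preperfect x hx univ univ_mem
  obtain ⟨U, U', hU, hU', hyU, hxU', hUU'⟩ := t2_separation hyx
  obtain ⟨V, hV, hyV, hVW, hVε⟩ :=
    exists_isOpen_closure_subset_ediam_le (hW.inter hU) ⟨hy, hyU⟩ hε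
  obtain ⟨V', hV', hxV', hV'W, hV'ε⟩ :=
    exists_isOpen_closure_subset_ediam_le (hW.inter hU') ⟨hx, hxU'⟩ hε
  refine ⟨fun b => cond b V V', Bool.forall_bool.2 ⟨?_, ?_⟩, pairwise_disjoint_on_bool.2 ?_⟩
  · exact ⟨hV', ⟨x, hxV'⟩, hV'W.trans inter_subset_left, hV'ε⟩
  · exact ⟨hV, ⟨y, hyV⟩, hVW.trans inter_subset_left, hVε⟩
  · exact hUU'.mono (subset_closure.trans (hVW.trans inter_subset_right))
      (subset_closure.trans (hV'W.trans inter_subset_right))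

end Splitting

namespace Mycielski

section Shrinking

variable {X ι : Type*} {S : Set ι}

variable (S) in
def BoxesSubset {κ : Type*} (g : ι → Set X) (E : Set (κ → X)) : Prop :=
  ∀ t : κ → ι, Injective t → (∀ i, t i ∈ S) → univ.pi (fun i => g (t i)) ⊆ E

lemma BoxesSubset.mono {κ : Type*} {g g' : ι → Set X} {E : Set (κ → X)}
    (h : BoxesSubset S g E) (hg' : ∀ i ∈ S, g' i ⊆ g i) : BoxesSubset S g' E :=
  fun t ht htS => (pi_mono fun i _ => hg' _ (htS i)).trans (h t ht htS)

variable [TopologicalSpace X]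

variable (S) in
def OpenNonemptyOn (g : ι → Set X) : Prop :=
  ∀ i ∈ S, IsOpen (g i) ∧ (g i).Nonempty

variable (S) in
def Shrinks (g' g : ι → Set X) : Prop :=
  OpenNonemptyOn S g' ∧ ∀ i ∈ S, g' i ⊆ g i

lemma Shrinks.trans {g'' g' g : ι → Set X} (h₁ : Shrinks S g'' g') (h₂ : Shrinks S g' g) :
    Shrinks S g'' g :=
  ⟨h₁.1, fun i hi => (h₁.2 i hi).trans (h₂.2 i hi)⟩

lemma exists_shrinks_forall_mem {α : Type*} {T : Set α} (hT : T.Finite)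
    {P : α → (ι → Set X) → Prop}
    (hP : ∀ a ∈ T, ∀ g, OpenNonemptyOn S g → ∃ g', Shrinks S g' g ∧ P a g')
    (hPmono : ∀ a ∈ T, ∀ g g', (∀ i ∈ S, g' i ⊆ g i) → P a g → P a g')
    {g : ι → Set X} (hg : OpenNonemptyOn S g) :
    ∃ g', Shrinks S g' g ∧ ∀ a ∈ T, P a g' := by
  induction T, hT using Set.Finite.induction_on generalizing g with
  | empty => exact ⟨g, ⟨hg, fun _ _ => Subset.rfl⟩, by simp⟩
  | @insert a T _ _ ih =>
    obtain ⟨g₁, hg₁, hPT⟩ := ih (fun b hb => hP b (mem_insert_of_mem a hb))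
      (fun b hb => hPmono b (mem_insert_of_mem a hb)) hg
    obtain ⟨g₂, hg₂, hPa⟩ := hP a (mem_insert a T) g₁ hg₁.1
    refine ⟨g₂, hg₂.trans hg₁, forall_mem_insert.2 ⟨hPa, fun b hb => ?_⟩⟩
    exact hPmono b (mem_insert_of_mem a hb) g₁ g₂ hg₂.2 (hPT b hb)

lemma exists_shrinks_pi_subset {κ : Type*} [Finite κ] {E : Set (κ → X)} (hEo : IsOpen E)
    (hEd : Dense E) {t : κ → ι} (ht : Injective t) (htS : ∀ i, t i ∈ S) {g : ι → Set X}
    (hg : OpenNonemptyOn S g) :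
    ∃ g', Shrinks S g' g ∧ univ.pi (fun i => g' (t i)) ⊆ E := by
  classical
  have hbox : IsOpen (univ.pi fun i => g (t i)) :=
    isOpen_set_pi finite_univ fun i _ => (hg _ (htS i)).1
  obtain ⟨x, hxbox, hxE⟩ := hEd.inter_open_nonempty _ hbox
    (univ_pi_nonempty_iff.2 fun i => (hg _ (htS i)).2)
  obtain ⟨V, hV, hVsub⟩ := isOpen_pi_iff'.1 (hbox.inter hEo) x ⟨hxbox, hxE⟩
  -- `t` is injective, so each side of this box can be given to its own node `t i`.
  obtain ⟨g', hg't, hg'⟩ : ∃ g' : ι → Set X,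
      (∀ j, g' (t j) = V j ∩ g (t j)) ∧ ∀ i, (¬∃ j, t j = i) → g' i = g i :=
    ⟨extend t (fun j => V j ∩ g (t j)) g, ht.extend_apply _ _, extend_apply' _ _⟩
  have hshrinks : ∀ i ∈ S, (IsOpen (g' i) ∧ (g' i).Nonempty) ∧ g' i ⊆ g i := by
    intro i hi
    by_cases h : ∃ j, t j = i
    · obtain ⟨j, rfl⟩ := h
      rw [hg't]
      exact ⟨⟨(hV j).1.inter (hg _ hi).1, x j, (hV j).2, hxbox j trivial⟩,
        inter_subset_right⟩
    · rw [hg' i h]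
      exact ⟨hg i hi, Subset.rfl⟩
  refine ⟨g', ⟨fun i hi => (hshrinks i hi).1, fun i hi => (hshrinks i hi).2⟩, ?_⟩
  simp only [hg't]
  exact (pi_mono fun i _ => inter_subset_left).trans (hVsub.trans inter_subset_right)

lemma exists_shrinks_boxesSubset {κ : Type*} [Finite κ] (hS : S.Finite) {E : Set (κ → X)}
    (hEo : IsOpen E) (hEd : Dense E) {g : ι → Set X} (hg : OpenNonemptyOn S g) :
    ∃ g', Shrinks S g' g ∧ BoxesSubset S g' E := by
  have hT : {t : κ → ι | Injective t ∧ ∀ i, t i ∈ S}.Finite :=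
    (Set.Finite.pi' fun _ => hS).subset fun _ ht => ht.2
  obtain ⟨g', hg', hbox⟩ := exists_shrinks_forall_mem hT
    (P := fun t g' => univ.pi (fun i => g' (t i)) ⊆ E)
    (fun t ht _ hg => exists_shrinks_pi_subset hEo hEd ht.1 ht.2 hg)
    (fun t ht _ _ hsub hP => (pi_mono fun i _ => hsub _ (ht.2 i)).trans hP) hg
  exact ⟨g', hg', fun t ht htS => hbox t ⟨ht, htS⟩⟩

end Shrinking

/-- The node `(m, s)` is the node `s` of the `m`-th Cantor scheme. Scheme `m` has its root at
level `m + 1`, so that level `0` is empty. -/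
def level (p : ℕ × List Bool) : ℕ := p.1 + p.2.length + 1

lemma finite_setOf_level (k : ℕ) : {p : ℕ × List Bool | level p = k}.Finite :=
  ((finite_Iio k).prod (List.finite_length_le Bool k)).subset fun p (hp : level p = k) => by
    simp only [level] at hp
    exact ⟨show p.1 < k by omega, show p.2.length ≤ k by omega⟩

section NextStage

variable {X : Type*} [EMetricSpace X] [PerfectSpace X] {u : ℕ → Set X}
  {D : (n : ℕ) → ℕ → Set (Fin n → X)}

lemma exists_nextStage (hu : ∀ m, IsOpen (u m) ∧ (u m).Nonempty)
    (hD : ∀ n j, IsOpen (D n j) ∧ Dense (D n j)) {k : ℕ} {g : ℕ × List Bool → Set X}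
    (hg : OpenNonemptyOn {p | level p = k} g) :
    ∃ g', OpenNonemptyOn {p | level p = k + 1} g' ∧ g' (k, []) ⊆ u k ∧
      (∀ m s, level (m, s) = k →
        (∀ b, closure (g' (m, b :: s)) ⊆ g (m, s) ∧
          ediam (g' (m, b :: s)) ≤ ((k + 1 : ℕ) : ℝ≥0∞)⁻¹) ∧
        Pairwise (Disjoint on fun b => g' (m, b :: s))) ∧
      ∀ n ≤ k, ∀ j ≤ k, BoxesSubset {p | level p = k + 1} g' (D n j) := by
  have hε : (0 : ℝ≥0∞) < ((k + 1 : ℕ) : ℝ≥0∞)⁻¹ :=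
    ENNReal.inv_pos.2 (ENNReal.natCast_ne_top _)
  choose! V hV hVdisj using fun p (hp : p ∈ {p | level p = k}) =>
    exists_pairwise_disjoint_isOpen_closure_subset (hg p hp).1 (hg p hp).2 hε
  let g₁ : ℕ × List Bool → Set X := fun
    | (m, []) => u m
    | (m, b :: s) => V (m, s) b
  have hg₁ : OpenNonemptyOn {p | level p = k + 1} g₁ := by
    rintro ⟨m, _ | ⟨b, s⟩⟩ hp
    · exact hu m
    · have hms : level (m, s) = k := Nat.succ.inj hp
      exact ⟨(hV _ hms b).1, (hV _ hms b).2.1⟩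
  obtain ⟨g', hg'h, hbox⟩ := exists_shrinks_forall_mem ((finite_Iic k).prod (finite_Iic k))
    (P := fun nj g' => BoxesSubset {p | level p = k + 1} g' (D nj.1 nj.2))
    (fun _ _ _ hg =>
      exists_shrinks_boxesSubset (finite_setOf_level _) (hD _ _).1 (hD _ _).2 hg)
    (fun _ _ _ _ hsub hP => hP.mono hsub) hg₁
  have hsub : ∀ m s b, level (m, s) = k → g' (m, b :: s) ⊆ V (m, s) b := fun m s b hms =>
    hg'h.2 (m, b :: s) (congrArg Nat.succ hms)
  refine ⟨g', hg'h.1, hg'h.2 (k, []) rfl, fun m s hms => ⟨fun b => ?_, ?_⟩,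
    fun n hn j hj => hbox (n, j) ⟨hn, hj⟩⟩
  · exact ⟨(closure_mono (hsub m s b hms)).trans (hV _ hms b).2.2.1,
      (ediam_mono (hsub m s b hms)).trans (hV _ hms b).2.2.2⟩
  · exact fun b b' hbb' => (hVdisj _ hms hbb').mono (hsub m s b hms) (hsub m s b' hms)

end NextStage

def branch (m : ℕ) (σ : ℕ → Bool) (L : ℕ) : ℕ × List Bool := (m, res σ (L - (m + 1)))

lemma level_branch {m L : ℕ} (σ : ℕ → Bool) (h : m < L) : level (branch m σ L) = L := by
  simp only [level, branch, res_length]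
  omega

lemma eventually_branch_ne {m m' : ℕ} {σ σ' : ℕ → Bool} (h : (m, σ) ≠ (m', σ')) :
    ∀ᶠ L in atTop, branch m σ L ≠ branch m' σ' L := by
  rcases eq_or_ne m m' with rfl | hm
  · obtain ⟨i, hi⟩ := ne_iff.1 fun hσ : σ = σ' => h (by rw [hσ])
    filter_upwards [eventually_gt_atTop (i + m + 1)] with L hL heq
    exact hi (res_eq_res.1 (Prod.ext_iff.1 heq).2 (show i < L - (m + 1) by omega))
  · exact .of_forall fun L heq => hm (Prod.ext_iff.1 heq).1

section Scheme

variable {X : Type*} [MetricSpace X] {u : ℕ → Set X}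
  {D : (n : ℕ) → ℕ → Set (Fin n → X)} {A : ℕ × List Bool → Set X}

variable (u D) in
structure IsMycielskiScheme (A : ℕ × List Bool → Set X) : Prop where
  nonempty : ∀ p, (A p).Nonempty
  root_subset : ∀ m, A (m, []) ⊆ u m
  closureAntitone : ∀ m, ClosureAntitone fun s => A (m, s)
  disjoint : ∀ m, CantorScheme.Disjoint fun s => A (m, s)
  vanishingDiam : ∀ m, VanishingDiam fun s => A (m, s)
  eventually_boxesSubset : ∀ n j, ∀ᶠ L in atTop, BoxesSubset {p | level p = L} A (D n j)

theorem exists_isMycielskiScheme [PerfectSpace X] (hu : ∀ m, IsOpen (u m) ∧ (u m).Nonempty)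
    (hD : ∀ n j, IsOpen (D n j) ∧ Dense (D n j)) : ∃ A, IsMycielskiScheme u D A := by
  choose next hnext hroot hchild hbox using
    fun k (g : {g : ℕ × List Bool → Set X // OpenNonemptyOn {p | level p = k} g}) =>
      exists_nextStage hu hD g.2
  let F : (k : ℕ) → {g : ℕ × List Bool → Set X // OpenNonemptyOn {p | level p = k} g} :=
    fun k => Nat.rec ⟨fun _ => ∅, fun p hp => absurd hp (Nat.succ_ne_zero _)⟩
      (fun k g => ⟨next k g, hnext k g⟩) k
  let A : ℕ × List Bool → Set X := fun p => (F (level p)).1 p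
  have hA : ∀ L p, level p = L → A p = (F L).1 p := by rintro _ p rfl; rfl
  refine ⟨A, fun p => ((F (level p)).2 p rfl).2, fun m => hroot m (F m),
    fun m s b => ((hchild _ (F _) m s rfl).1 b).1, fun m s => (hchild _ (F _) m s rfl).2,
    fun m => vanishingDiam_of_ediam_le fun s => ?_, fun n j => ?_⟩
  · rcases s with _ | ⟨b, s⟩
    · simp
    · refine ((hchild _ (F _) m s rfl).1 b).2.trans (ENNReal.inv_le_inv.2 (Nat.cast_le.2 ?_))
      simp only [level, List.length_cons]
      omega
  · refine eventually_atTop.2 ⟨max n j + 1, fun L hL => ?_⟩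
    obtain ⟨k, rfl⟩ : ∃ k, L = k + 1 := ⟨L - 1, by omega⟩
    exact (hbox k (F k) n (by omega) j (by omega)).mono fun p hp => (hA _ p hp).le

theorem IsMycielskiScheme.mem_of_forall_mem_branch (hA : IsMycielskiScheme u D A) {n j : ℕ}
    {x : Fin n → X} {m : Fin n → ℕ} {σ : Fin n → ℕ → Bool}
    (hinj : Injective fun i => (m i, σ i)) (hx : ∀ i L, x i ∈ A (branch (m i) (σ i) L)) :
    x ∈ D n j := by
  have hne : ∀ᶠ L in atTop, ∀ i i', i ≠ i' →
      branch (m i) (σ i) L ≠ branch (m i') (σ i') L :=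
    eventually_all.2 fun i => eventually_all.2 fun i' => by
      rcases eq_or_ne i i' with rfl | h
      · exact .of_forall fun _ h => (h rfl).elim
      · exact (eventually_branch_ne (hinj.ne h)).mono fun _ hL _ => hL
  obtain ⟨L, hbox, hlt, hne⟩ := ((hA.eventually_boxesSubset n j).and
    ((eventually_all.2 fun i => eventually_gt_atTop (m i)).and hne)).exists
  exact hbox (fun i => branch (m i) (σ i) L) (fun i i' => not_imp_not.1 (hne i i'))
    (fun i => level_branch _ (hlt i)) fun i _ => hx i L

theorem IsMycielskiScheme.exists_mycielski_set [CompleteSpace X]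
    (hA : IsMycielskiScheme u D A) (hu : ∀ U, IsOpen U → U.Nonempty → ∃ m, u m ⊆ U) :
    ∃ K : Set X,
      (∀ U : Set X, IsOpen U → U.Nonempty →
        ∃ C : Set X, C ⊆ K ∩ U ∧ C.Nonempty ∧ Perfect C ∧ IsCompact C) ∧
      ∀ n j (x : Fin n → X), (∀ i, x i ∈ K) → Injective x → x ∈ D n j := by
  choose f hfc hfi hfA using fun m => exists_continuous_injective (hA.closureAntitone m)
    (hA.disjoint m) (hA.vanishingDiam m) fun s => hA.nonempty (m, s)
  refine ⟨⋃ m, range (f m), fun U hU hne => ?_, fun n j x hx hinj => ?_⟩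
  · obtain ⟨m, hm⟩ := hu U hU hne
    have hC := isCompact_range (hfc m)
    refine ⟨range (f m), ?_, range_nonempty _,
      ⟨hC.isClosed, (hfc m).preperfect_range (hfi m)⟩, hC⟩
    rintro _ ⟨σ, rfl⟩
    exact ⟨mem_iUnion_of_mem m (mem_range_self σ), hm (hA.root_subset m (hfA m σ 0))⟩
  · choose m hm using fun i => mem_iUnion.1 (hx i)
    choose σ hσ using hm
    refine hA.mem_of_forall_mem_branch (m := m) (σ := σ) (fun i i' h => hinj ?_)
      fun i L => hσ i ▸ hfA _ _ _
    obtain ⟨h₁, h₂⟩ := Prod.mk.inj h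
    rw [← hσ i, ← hσ i', h₁, h₂]

end Scheme

end Mycielski

/-- Mycielski's theorem: Let `X` be a separable complete metric space
without isolated points, and for each `n` let `R n` be residual in `X^n`. Then there is
a Mycielski set `K` (its intersection with every nonempty open set contains a Cantor
set, i.e. a nonempty perfect compact set) such that every tuple of pairwise distinct
points of `K` lies in the corresponding `R n`. -/
theorem mycielski
    {X : Type*} [MetricSpace X] [CompleteSpace X] [TopologicalSpace.SeparableSpace X]
    (hX : ∀ x : X, Filter.NeBot (nhdsWithin x {x}ᶜ))
    (R : (n : ℕ) → Set (Fin n → X))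
    (hR : ∀ n, R n ∈ residual (Fin n → X)) :
    ∃ K : Set X,
      (∀ U : Set X, IsOpen U → U.Nonempty →
        ∃ C : Set X, C ⊆ K ∩ U ∧ C.Nonempty ∧ Perfect C ∧ IsCompact C) ∧
      ∀ (n : ℕ) (x : Fin n → X), (∀ i, x i ∈ K) → Function.Injective x → x ∈ R n := by
  have : PerfectSpace X := perfectSpace_iff_forall_not_isolated.2 hX
  choose D hD hDR using fun n => exists_seq_isOpen_dense_of_mem_residual (hR n)
  rcases isEmpty_or_nonempty X with _ | _
  · refine ⟨∅, fun U _ hU => (hU.ne_empty U.eq_empty_of_isEmpty).elim, fun n x hx _ => ?_⟩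
    have : IsEmpty (Fin n) := ⟨fun i => hx i⟩
    obtain ⟨z, hz⟩ := (dense_of_mem_residual (hR n)).nonempty
    rwa [Subsingleton.elim x z]
  · obtain ⟨u, hu, hbasis⟩ := exists_seq_isOpen_nonempty_subset X
    obtain ⟨A, hA⟩ := Mycielski.exists_isMycielskiScheme hu hD
    obtain ⟨K, hK, hKD⟩ := hA.exists_mycielski_set hbasis
    exact ⟨K, hK, fun n x hxK hx => hDR n (mem_iInter.2 fun j => hKD n j x hxK hx)⟩
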